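/- Define g : (−2π, 2π) → ℝ by g(r) = (r − sin r)/(8 sin²(r/2)) for r ≠ 0 and g(0) = 0. Then g is continuous, odd, strictly increasing, and maps (−2π, 2π) bijectively onto ℝ. Consequently, for every c ∈ ℝ \ {0} there is exactly one r ∈ (−2π, 2π) \ {0} with g(r) = c. -/

import Mathlib

/-- The function `g(r) = (r − sin r)/(8 sin²(r/2))` with `g(0) = 0`. -/
noncomputable def g13 (r : ℝ) : ℝ :=
  if r = 0 then 0 else (r - Real.sin r) / (8 * Real.sin (r / 2) ^ 2)

/-!
Writing `s = sin (r/2)` and `c = cos (r/2)`, the derivative of `g` away from `0` is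
`(s - (r/2) c) / (4 s³)`, which is positive on `(0, 2π)` because `t cos t < sin t` on `(0, π)`
(that is, `t < tan t`). Near `0`, `|r - sin r| ≤ |r|³/6` and Jordan's inequality
`|sin (r/2)| ≥ |r|/π` give `|g r| ≤ π² |r| / 48`, so `g` is continuous at `0` and strictly
increasing on `[0, 2π)`, hence, being odd, on `(-2π, 2π)`. As `r → 2π⁻` the numerator tends
to `2π` and the denominator to `0⁺`, so `g → +∞`, and by oddness `g → -∞` as `r → -2π⁺`;
the intermediate value theorem then makes `g` onto `ℝ`.
-/

open Real Set Filter Topology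

theorem Function.Odd.strictMonoOn_Ioo_of_Ico {α β : Type*} [AddCommGroup α] [LinearOrder α]
    [IsOrderedAddMonoid α] [AddCommGroup β] [PartialOrder β] [IsOrderedAddMonoid β]
    {f : α → β} (hf : f.Odd) {a : α} (ha : 0 < a) (h : StrictMonoOn f (Ico 0 a)) :
    StrictMonoOn f (Ioo (-a) a) := by
  have ha' : -a < 0 := neg_lt_zero.2 ha
  rw [← Ioc_union_Ico_eq_Ioo ha' ha]
  refine StrictMonoOn.union ?_ h ⟨⟨ha', le_rfl⟩, fun _ hx => hx.2⟩ ⟨⟨le_rfl, ha⟩, fun _ hx => hx.1⟩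
  intro x hx y hy hxy
  have := h ⟨neg_nonneg.2 hy.2, neg_lt.1 hy.1⟩ ⟨neg_nonneg.2 hx.2, neg_lt.1 hx.1⟩ (neg_lt_neg hxy)
  rwa [hf.eq, hf.eq, neg_lt_neg_iff] at this

theorem Real.mul_cos_lt_sin {t : ℝ} (ht : 0 < t) (ht' : t < π) : t * cos t < sin t := by
  have hsin : 0 < sin t := sin_pos_of_pos_of_lt_pi ht ht'
  rcases le_or_gt (cos t) 0 with hcos | hcos
  · nlinarith
  · have ht2 : t < π / 2 := by
      by_contra! h
      linarith [cos_nonpos_of_pi_div_two_le_of_le h (by linarith [pi_pos])]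
    calc t * cos t < tan t * cos t := mul_lt_mul_of_pos_right (lt_tan ht ht2) hcos
      _ = sin t := by rw [tan_eq_sin_div_cos, div_mul_cancel₀ _ hcos.ne']

lemma sin_half_pos_of_mem_Ioo {x : ℝ} (hx : x ∈ Ioo 0 (2 * π)) : 0 < sin (x / 2) :=
  sin_pos_of_pos_of_lt_pi (by linarith [hx.1]) (by linarith [hx.2])

lemma g13_odd : Function.Odd g13 := by
  intro r
  rcases eq_or_ne r 0 with rfl | hr
  · simp [g13]
  · simp only [g13, neg_eq_zero, if_neg hr, neg_div, sin_neg, neg_sq]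
    ring

lemma g13_eventuallyEq {x : ℝ} (hx : x ≠ 0) :
    g13 =ᶠ[𝓝 x] fun r => (r - sin r) / (8 * sin (r / 2) ^ 2) := by
  filter_upwards [isOpen_ne.mem_nhds hx] with r hr
  simp [g13, hr]

lemma abs_g13_le {r : ℝ} (hr : |r| ≤ π) : |g13 r| ≤ π ^ 2 / 48 * |r| := by
  rcases eq_or_ne r 0 with rfl | hr0
  · simp [g13]
  have ha : 0 < |r| := abs_pos.2 hr0
  have hsq : sin (r / 2) ^ 2 = sin (|r| / 2) ^ 2 := by
    rcases abs_choice r with h | h <;> simp [h, neg_div]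
  have hjordan : |r| / π ≤ sin (|r| / 2) := by
    have := mul_le_sin (x := |r| / 2) (by positivity) (by linarith)
    field_simp at this ⊢
    linarith
  have hden : 8 * (|r| / π) ^ 2 ≤ 8 * sin (r / 2) ^ 2 := by
    rw [hsq]; gcongr
  have hpos : 0 < 8 * sin (r / 2) ^ 2 := lt_of_lt_of_le (by positivity) hden
  rw [g13, if_neg hr0, abs_div, abs_of_pos hpos]
  calc |r - sin r| / (8 * sin (r / 2) ^ 2) ≤ (|r| ^ 3 / 6) / (8 * (|r| / π) ^ 2) :=
        div_le_div₀ (by positivity) (abs_sub_sin_le r) (by positivity) hden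
    _ = π ^ 2 / 48 * |r| := by field_simp; ring

lemma continuousAt_g13_zero : ContinuousAt g13 0 :=
  continuousAt_of_locally_lipschitz pi_pos (π ^ 2 / 48) fun y hy => by
    simpa [g13_odd.map_zero, dist_eq] using abs_g13_le (by simpa [dist_eq] using hy.le)

lemma continuousAt_g13 {x : ℝ} (hx : sin (x / 2) ≠ 0) : ContinuousAt g13 x := by
  have hx0 : x ≠ 0 := by rintro rfl; simp at hx
  refine ContinuousAt.congr ?_ (g13_eventuallyEq hx0).symm
  exact ((continuous_id.sub continuous_sin).continuousAt).div
    (by fun_prop) (by positivity)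

lemma continuousOn_g13 : ContinuousOn g13 (Ioo (-(2 * π)) (2 * π)) := by
  intro x hx
  refine ContinuousAt.continuousWithinAt ?_
  rcases eq_or_ne x 0 with rfl | hx0
  · exact continuousAt_g13_zero
  · refine continuousAt_g13 fun h => hx0 ?_
    have := (sin_eq_zero_iff_of_lt_of_lt (x := x / 2) (by linarith [hx.1]) (by linarith [hx.2])).1 h
    linarith

lemma hasDerivAt_g13 {x : ℝ} (hx : sin (x / 2) ≠ 0) :
    HasDerivAt g13 ((sin (x / 2) - x / 2 * cos (x / 2)) / (4 * sin (x / 2) ^ 3)) x := by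
  have hx0 : x ≠ 0 := by rintro rfl; simp at hx
  have hnum : HasDerivAt (fun r => r - sin r) (1 - cos x) x :=
    (hasDerivAt_id x).sub (hasDerivAt_sin x)
  have hden : HasDerivAt (fun r => 8 * sin (r / 2) ^ 2)
      (8 * (2 * sin (x / 2) * (cos (x / 2) * (1 / 2)))) x := by
    simpa using (((hasDerivAt_id x).div_const 2).sin.pow 2).const_mul 8
  refine ((hnum.div hden (by positivity)).congr_of_eventuallyEq
    (g13_eventuallyEq hx0)).congr_deriv ?_
  obtain ⟨t, rfl⟩ : ∃ t, x = 2 * t := ⟨x / 2, by ring⟩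
  rw [mul_div_cancel_left₀ t two_ne_zero] at hx ⊢
  rw [sin_two_mul, cos_two_mul]
  field_simp
  ring

lemma strictMonoOn_g13 : StrictMonoOn g13 (Ioo (-(2 * π)) (2 * π)) := by
  refine g13_odd.strictMonoOn_Ioo_of_Ico two_pi_pos ?_
  refine strictMonoOn_of_deriv_pos (convex_Ico _ _) ?_ fun x hx => ?_
  · exact continuousOn_g13.mono (Ico_subset_Ioo_left (neg_lt_zero.2 two_pi_pos))
  · rw [interior_Ico] at hx
    have hs := sin_half_pos_of_mem_Ioo hx
    rw [(hasDerivAt_g13 hs.ne').deriv]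
    have := mul_cos_lt_sin (t := x / 2) (by linarith [hx.1]) (by linarith [hx.2])
    exact div_pos (by linarith) (by positivity)

lemma tendsto_g13_two_pi : Tendsto g13 (𝓝[<] (2 * π)) atTop := by
  have hIoo : Ioo 0 (2 * π) ∈ 𝓝[<] (2 * π) := Ioo_mem_nhdsLT two_pi_pos
  have hnum : Tendsto (fun r => r - sin r) (𝓝[<] (2 * π)) (𝓝 (2 * π)) := by
    have : Continuous fun r => r - sin r := by fun_prop
    simpa using (this.tendsto (2 * π)).mono_left nhdsWithin_le_nhds
  have hden : Tendsto (fun r => 8 * sin (r / 2) ^ 2) (𝓝[<] (2 * π)) (𝓝[>] 0) := by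
    refine tendsto_nhdsWithin_iff.2 ⟨?_, ?_⟩
    · have : Continuous fun r => 8 * sin (r / 2) ^ 2 := by fun_prop
      simpa using (this.tendsto (2 * π)).mono_left nhdsWithin_le_nhds
    · filter_upwards [hIoo] with r hr
      have := sin_half_pos_of_mem_Ioo hr
      exact mem_Ioi.2 (by positivity)
  refine (hnum.pos_mul_atTop two_pi_pos (tendsto_inv_nhdsGT_zero.comp hden)).congr' ?_
  filter_upwards [hIoo] with r hr
  simp [g13, hr.1.ne', div_eq_mul_inv]

lemma tendsto_g13_neg_two_pi : Tendsto g13 (𝓝[>] (-(2 * π))) atBot := by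
  simpa [Function.comp_def, g13_odd.eq] using
    tendsto_neg_atTop_atBot.comp (tendsto_g13_two_pi.comp tendsto_neg_nhdsGT_neg)

lemma surjOn_g13 : SurjOn g13 (Ioo (-(2 * π)) (2 * π)) univ := by
  have h : -(2 * π) < 2 * π := neg_lt_self two_pi_pos
  exact continuousOn_g13.surjOn_of_tendsto (nonempty_Ioo.2 h)
    (by rw [tendsto_comp_coe_Ioo_atBot h]; exact tendsto_g13_neg_two_pi)
    (by rw [tendsto_comp_coe_Ioo_atTop h]; exact tendsto_g13_two_pi)

/-- On `(−2π, 2π)` the function `g13` is continuous, odd, strictly increasing and maps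
the interval bijectively onto `ℝ`; in particular for every `c ≠ 0` there is exactly one
`r ∈ (−2π, 2π) \ {0}` with `g13 r = c`. -/
theorem stmt_13 :
    ContinuousOn g13 (Set.Ioo (-(2 * Real.pi)) (2 * Real.pi)) ∧
    (∀ r ∈ Set.Ioo (-(2 * Real.pi)) (2 * Real.pi), g13 (-r) = -g13 r) ∧
    StrictMonoOn g13 (Set.Ioo (-(2 * Real.pi)) (2 * Real.pi)) ∧
    Set.BijOn g13 (Set.Ioo (-(2 * Real.pi)) (2 * Real.pi)) Set.univ ∧
    (∀ c : ℝ, c ≠ 0 → ∃! r : ℝ,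
      r ∈ Set.Ioo (-(2 * Real.pi)) (2 * Real.pi) ∧ r ≠ 0 ∧ g13 r = c) := by
  have hinj := strictMonoOn_g13.injOn
  refine ⟨continuousOn_g13, fun r _ => g13_odd r, strictMonoOn_g13,
    ⟨mapsTo_univ _ _, hinj, surjOn_g13⟩, fun c hc => ?_⟩
  obtain ⟨r, hr, rfl⟩ := surjOn_g13 (mem_univ c)
  refine ⟨r, ⟨hr, fun h0 => hc (by rw [h0, g13_odd.map_zero]), rfl⟩, ?_⟩
  exact fun s ⟨hs, _, hsr⟩ => hinj hs hr hsr
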